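/- arXiv:1910.03490 — 2 statements merged into one kernel-verified Lean document; each statement's English description precedes it below -/
import Mathlib

section
/- For the Tribonacci-Lucas numbers K (K(0)=3, K(1)=1, K(2)=3, K(n)=K(n-1)+K(n-2)+K(n-3)), for all n ≥ 0: ∑_{k=0}^{n} K(k) = (K(n+3) - K(n+1))/2, ∑_{k=0}^{n} K(2k) = (K(2n+1) + K(2n) + 2)/2, and ∑_{k=0}^{n} K(2k+1) = (K(2n+2) + K(2n+1) - 2)/2. -/
/-!
Each identity says that a partial sum of a sequence satisfying the Tribonacci recurrence
differs from a fixed combination of nearby terms by a constant: passing from `n` to `n + 1`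
changes both sides by the same amount, precisely by one instance of the recurrence.
The constants are read off at `n = 0`. Written with both sides moved so that no subtraction
or halving occurs, the identities hold in any additive commutative monoid.
-/

open Finset

section TribonacciRecurrence

variable {M : Type*} [AddCommMonoid M] {K : ℕ → M}

theorem two_nsmul_sum_range_add_of_tribonacci
    (hK : ∀ m, K (m + 3) = K (m + 2) + K (m + 1) + K m) (n : ℕ) :
    2 • ∑ k ∈ range (n + 1), K k + K (n + 1) + K 2 = K (n + 3) + K 0 := by
  induction n with
  | zero => simp only [zero_add, sum_range_one, hK 0, two_nsmul]; abel
  | succ n ih =>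
    calc 2 • ∑ k ∈ range (n + 2), K k + K (n + 2) + K 2
        = (2 • ∑ k ∈ range (n + 1), K k + K (n + 1) + K 2) + K (n + 1) + K (n + 2) := by
          rw [sum_range_succ, nsmul_add, two_nsmul (K (n + 1))]; abel
      _ = K (n + 4) + K 0 := by rw [ih, hK (n + 1)]; abel

theorem two_nsmul_sum_range_even_add_of_tribonacci
    (hK : ∀ m, K (m + 3) = K (m + 2) + K (m + 1) + K m) (n : ℕ) :
    2 • ∑ k ∈ range (n + 1), K (2 * k) + K 1 = K (2 * n + 1) + K (2 * n) + K 0 := by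
  induction n with
  | zero => simp only [zero_add, mul_zero, sum_range_one, two_nsmul]; abel
  | succ n ih =>
    calc 2 • ∑ k ∈ range (n + 2), K (2 * k) + K 1
        = (2 • ∑ k ∈ range (n + 1), K (2 * k) + K 1) + 2 • K (2 * n + 2) := by
          rw [sum_range_succ, nsmul_add, mul_add_one]; abel
      _ = K (2 * (n + 1) + 1) + K (2 * (n + 1)) + K 0 := by
          rw [ih, mul_add_one, hK (2 * n), two_nsmul]; abel

theorem two_nsmul_sum_range_odd_add_of_tribonacci
    (hK : ∀ m, K (m + 3) = K (m + 2) + K (m + 1) + K m) (n : ℕ) :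
    2 • ∑ k ∈ range (n + 1), K (2 * k + 1) + K 2 = K (2 * n + 2) + K (2 * n + 1) + K 1 := by
  induction n with
  | zero => simp only [zero_add, mul_zero, sum_range_one, two_nsmul]; abel
  | succ n ih =>
    calc 2 • ∑ k ∈ range (n + 2), K (2 * k + 1) + K 2
        = (2 • ∑ k ∈ range (n + 1), K (2 * k + 1) + K 2) + 2 • K (2 * n + 3) := by
          rw [sum_range_succ, nsmul_add, mul_add_one]; abel
      _ = K (2 * (n + 1) + 2) + K (2 * (n + 1) + 1) + K 1 := by
          rw [ih, mul_add_one, hK (2 * n + 1), two_nsmul]; abel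

end TribonacciRecurrence

theorem sum_tribonacci_lucas (K : ℕ → ℕ) (h0 : K 0 = 3) (h1 : K 1 = 1) (h2 : K 2 = 3)
    (hrec : ∀ n, 3 ≤ n → K n = K (n-1) + K (n-2) + K (n-3)) :
    ∀ n : ℕ,
      (∑ k ∈ Finset.range (n+1), K k = (K (n+3) - K (n+1)) / 2) ∧
      (∑ k ∈ Finset.range (n+1), K (2*k) = (K (2*n+1) + K (2*n) + 2) / 2) ∧
      (∑ k ∈ Finset.range (n+1), K (2*k+1) = (K (2*n+2) + K (2*n+1) - 2) / 2) := by
  have hK : ∀ m, K (m + 3) = K (m + 2) + K (m + 1) + K m := fun m => hrec (m + 3) (by omega)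
  intro n
  have hall := two_nsmul_sum_range_add_of_tribonacci hK n
  have heven := two_nsmul_sum_range_even_add_of_tribonacci hK n
  have hodd := two_nsmul_sum_range_odd_add_of_tribonacci hK n
  simp only [smul_eq_mul, h0, h1, h2] at hall heven hodd
  omega
end

section
/- Let W : ℤ → ℂ satisfy W(n) = r·W(n-1) + s·W(n-2) + t·W(n-3) for all integers n, with t ≠ 0 and (r+s+t-1)(r-s+t+1) ≠ 0. Then for all n ≥ 1, ∑_{k=1}^{n} W(-2k) = (-(r+t)·W(-2n+1) + (r²+rt+s-1)·W(-2n) + (st-t)·W(-2n-1) + (1-s)·W(2) + (t+rs)·W(1) + (1-rt-2s-r²+s²)·W(0)) / ((r+s+t-1)(r-s+t+1)). -/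
/-!
Write `D = (r+s+t-1)(r-s+t+1)`. The recurrence makes `D · W(m-2)` a difference `P(m-2) - P(m)`
of the linear form `P(m) = -(r+t) W(m+1) + (r²+rt+s-1) W(m) + (st-t) W(m-1)`, so the sum of
`D · W(-2k)` telescopes to `P(-2n) - P(0)`. Eliminating `t W(-1) = W(2) - r W(1) - s W(0)` from
`P(0)` gives the constant terms of the formula.
-/

namespace GenTribonacci

variable {R : Type*} [CommRing R] (W : ℤ → R) (r s t : R)

def potential (m : ℤ) : R :=
  -(r+t) * W (m+1) + (r^2+r*t+s-1) * W m + (s*t-t) * W (m-1)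

variable {W r s t}

theorem mul_eq_potential_sub_potential
    (hrec : ∀ n : ℤ, W n = r * W (n-1) + s * W (n-2) + t * W (n-3)) (m : ℤ) :
    (r+s+t-1) * (r-s+t+1) * W (m-2) = potential W r s t (m-2) - potential W r s t m := by
  have hnext := hrec (m+1)
  rw [add_sub_cancel_right, show m + 1 - 2 = m - 1 by ring, show m + 1 - 3 = m - 2 by ring] at hnext
  simp only [potential, show m - 2 + 1 = m - 1 by ring, show m - 2 - 1 = m - 3 by ring]
  linear_combination (s-1) * hrec m - (r+t) * hnext

theorem mul_sum_neg_even_eq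
    (hrec : ∀ n : ℤ, W n = r * W (n-1) + s * W (n-2) + t * W (n-3)) (n : ℕ) :
    (r+s+t-1) * (r-s+t+1) * ∑ k ∈ Finset.Icc 1 n, W (-(2 * k : ℤ)) =
      potential W r s t (-(2 * n : ℤ)) - potential W r s t 0 := by
  induction n with
  | zero => simp
  | succ n ih =>
    rw [Finset.sum_Icc_succ_top (by omega), mul_add, ih]
    have step := mul_eq_potential_sub_potential hrec (-(2 * n : ℤ))
    rw [show -(2 * n : ℤ) - 2 = -(2 * (n + 1 : ℕ) : ℤ) by push_cast; ring] at step
    linear_combination step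

theorem neg_potential_zero
    (hrec : ∀ n : ℤ, W n = r * W (n-1) + s * W (n-2) + t * W (n-3)) :
    -potential W r s t 0 =
      (1-s) * W 2 + (t+r*s) * W 1 + (1-r*t-2*s-r^2+s^2) * W 0 := by
  have h2 : W 2 = r * W 1 + s * W 0 + t * W (-1) := by simpa using hrec 2
  simp only [potential, zero_add, zero_sub]
  linear_combination (s-1) * h2

end GenTribonacci

open GenTribonacci in
theorem sum_gen_tribonacci_neg_even_general (W : ℤ → ℂ) (r s t : ℂ)
    (hrec : ∀ n : ℤ, W n = r * W (n-1) + s * W (n-2) + t * W (n-3))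
    (h : (r+s+t-1) * (r-s+t+1) ≠ 0) :
    ∀ n : ℕ, 1 ≤ n →
      ∑ k ∈ Finset.Icc 1 n, W (-(2 * k : ℤ)) =
        (-(r+t) * W (-(2*n : ℤ)+1) + (r^2+r*t+s-1) * W (-(2*n : ℤ))
          + (s*t-t) * W (-(2*n : ℤ)-1)
          + (1-s) * W 2 + (t+r*s) * W 1 + (1-r*t-2*s-r^2+s^2) * W 0)
        / ((r+s+t-1) * (r-s+t+1)) := by
  intro n _
  rw [eq_div_iff h, mul_comm, mul_sum_neg_even_eq hrec, sub_eq_add_neg, neg_potential_zero hrec,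
    potential]
  ring

theorem sum_gen_tribonacci_neg_even (W : ℤ → ℂ) (r s t : ℂ)
    (hrec : ∀ n : ℤ, W n = r * W (n-1) + s * W (n-2) + t * W (n-3))
    (ht : t ≠ 0) (h : (r+s+t-1) * (r-s+t+1) ≠ 0) :
    ∀ n : ℕ, 1 ≤ n →
      ∑ k ∈ Finset.Icc 1 n, W (-(2 * k : ℤ)) =
        (-(r+t) * W (-(2*n : ℤ)+1) + (r^2+r*t+s-1) * W (-(2*n : ℤ))
          + (s*t-t) * W (-(2*n : ℤ)-1)
          + (1-s) * W 2 + (t+r*s) * W 1 + (1-r*t-2*s-r^2+s^2) * W 0)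
        / ((r+s+t-1) * (r-s+t+1)) :=
  sum_gen_tribonacci_neg_even_general W r s t hrec h
end
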